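/- Let q : (0,1) → (0,∞) be a measurable quantile density function such that ln q is integrable on (0,1) and let η > 0. Then ∫₀¹ p (−ln p)^η q(p) dp ≥ exp( ∫₀¹ ln q(p) dp ) · exp( ∫₀¹ ln( p (−ln p)^η ) dp ), where exp(∫₀¹ ln(p(−ln p)^η) dp) = e^{−1 − ηγ} with γ the Euler–Mascheroni constant. -/

import Mathlib

open MeasureTheory Real Set

lemma image_exp_neg : (fun t : ℝ => Real.exp (-t)) '' Set.Ioi 0 = Set.Ioo 0 1 := by
  ext y
  constructor
  · rintro ⟨t, ht, rfl⟩
    exact ⟨Real.exp_pos _, Real.exp_lt_one_iff.mpr (by simpa using ht)⟩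
  · rintro ⟨h0, h1⟩
    exact ⟨-Real.log y, by simpa using Real.log_neg h0 h1, by simp [Real.exp_log h0]⟩

lemma hasDeriv_exp_neg (x : ℝ) :
    HasDerivWithinAt (fun t : ℝ => Real.exp (-t)) (-Real.exp (-x)) (Set.Ioi 0) x := by
  have h := ((Real.hasDerivAt_exp (-x)).comp x (hasDerivAt_neg x))
  simpa [mul_comm, Function.comp_def] using h.hasDerivWithinAt

lemma injOn_exp_neg : Set.InjOn (fun t : ℝ => Real.exp (-t)) (Set.Ioi 0) :=
  (Real.exp_injective.comp neg_injective).injOn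

lemma subst_integral (g : ℝ → ℝ) :
    ∫ p in Set.Ioo (0:ℝ) 1, g p = ∫ t in Set.Ioi (0:ℝ), Real.exp (-t) * g (Real.exp (-t)) := by
  rw [← image_exp_neg,
    MeasureTheory.integral_image_eq_integral_abs_deriv_smul measurableSet_Ioi
      (fun x _ => hasDeriv_exp_neg x) injOn_exp_neg g]
  simp [abs_of_pos (Real.exp_pos _)]

lemma subst_integrable (g : ℝ → ℝ)
    (h : MeasureTheory.IntegrableOn (fun t : ℝ => Real.exp (-t) * g (Real.exp (-t)))
      (Set.Ioi (0:ℝ))) :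
    MeasureTheory.IntegrableOn g (Set.Ioo (0:ℝ) 1) := by
  rw [← image_exp_neg,
    MeasureTheory.integrableOn_image_iff_integrableOn_abs_deriv_smul measurableSet_Ioi
      (fun x _ => hasDeriv_exp_neg x) injOn_exp_neg g]
  refine h.congr_fun (fun x _ => ?_) measurableSet_Ioi
  simp [abs_of_pos (Real.exp_pos _)]

lemma integrable_exp_mul_self : MeasureTheory.IntegrableOn
    (fun t : ℝ => Real.exp (-t) * t) (Set.Ioi (0:ℝ)) := by
  have := Real.GammaIntegral_convergent (by norm_num : (0:ℝ) < 2)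
  simp only [show (2:ℝ) - 1 = 1 by norm_num, Real.rpow_one] at this
  exact this

lemma integral_exp_mul_self : ∫ t in Set.Ioi (0:ℝ), Real.exp (-t) * t = 1 := by
  have := (Real.Gamma_eq_integral (by norm_num : (0:ℝ) < 2)).symm
  simp only [show (2:ℝ) - 1 = 1 by norm_num, Real.rpow_one, Real.Gamma_two] at this
  exact this

lemma integrable_exp_mul_log : MeasureTheory.IntegrableOn
    (fun t : ℝ => Real.exp (-t) * Real.log t) (Set.Ioi (0:ℝ)) := by
  have hmeas : ∀ (s : Set ℝ), AEStronglyMeasurable (fun t : ℝ => Real.exp (-t) * Real.log t)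
      (volume.restrict s) := fun s =>
    ((Real.measurable_exp.comp measurable_neg).mul Real.measurable_log).aestronglyMeasurable
  have hsplit : Set.Ioc (0:ℝ) 1 ∪ Set.Ioi (1:ℝ) = Set.Ioi (0:ℝ) :=
    Set.Ioc_union_Ioi_eq_Ioi zero_le_one
  rw [← hsplit]
  apply MeasureTheory.IntegrableOn.union
  · have hrint : MeasureTheory.IntegrableOn (fun t : ℝ => 2 * t ^ (-(1:ℝ)/2))
        (Set.Ioc (0:ℝ) 1) := by
      have := (intervalIntegral.intervalIntegrable_rpow' (by norm_num : (-1:ℝ) < -(1:ℝ)/2)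
        (a := 0) (b := 1)).1
      exact this.const_mul 2
    refine MeasureTheory.Integrable.mono hrint (hmeas _) ?_
    filter_upwards [ae_restrict_mem measurableSet_Ioc] with t ht
    obtain ⟨ht0, ht1⟩ := ht
    have hlog : |Real.log t| ≤ 2 * t ^ (-(1:ℝ)/2) := by
      rw [abs_of_nonpos (Real.log_nonpos ht0.le ht1)]
      have h1 : Real.log t⁻¹ ≤ (t⁻¹) ^ ((1:ℝ)/2) / ((1:ℝ)/2) :=
        Real.log_le_rpow_div (by positivity) (by norm_num)
      rw [Real.log_inv] at h1
      have h2 : (t⁻¹) ^ ((1:ℝ)/2) = t ^ (-(1:ℝ)/2) := by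
        rw [Real.inv_rpow ht0.le, ← Real.rpow_neg ht0.le]
        norm_num
      rw [h2] at h1
      calc -Real.log t ≤ t ^ (-(1:ℝ)/2) / ((1:ℝ)/2) := h1
        _ = 2 * t ^ (-(1:ℝ)/2) := by ring
    calc ‖Real.exp (-t) * Real.log t‖ = Real.exp (-t) * |Real.log t| := by
          rw [norm_mul, Real.norm_eq_abs, Real.norm_eq_abs, abs_of_pos (Real.exp_pos _)]
      _ ≤ 1 * (2 * t ^ (-(1:ℝ)/2)) := by
          exact mul_le_mul (Real.exp_le_one_iff.mpr (by linarith)) hlog (abs_nonneg _) zero_le_one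
      _ = ‖2 * t ^ (-(1:ℝ)/2)‖ := by
          rw [one_mul, Real.norm_eq_abs, abs_of_nonneg (by positivity)]
  · refine MeasureTheory.Integrable.mono (integrable_exp_mul_self.mono_set
      (Set.Ioi_subset_Ioi zero_le_one)) (hmeas _) ?_
    filter_upwards [ae_restrict_mem measurableSet_Ioi] with t ht
    have ht1 : (1:ℝ) < t := ht
    have hb : |Real.log t| ≤ t := by
      rw [abs_of_nonneg (Real.log_nonneg ht1.le)]
      linarith [Real.log_le_sub_one_of_pos (by linarith : (0:ℝ) < t)]
    rw [norm_mul, norm_mul, Real.norm_eq_abs, Real.norm_eq_abs, Real.norm_eq_abs,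
      abs_of_pos (Real.exp_pos _), abs_of_pos (by linarith : (0:ℝ) < t)]
    exact mul_le_mul_of_nonneg_left hb (Real.exp_pos _).le


lemma integral_exp_mul_log_eq : ∫ t in Set.Ioi (0:ℝ), Real.exp (-t) * Real.log t
    = -Real.eulerMascheroniConstant := by
  set I : ℝ := ∫ t in Set.Ioi (0:ℝ), Real.exp (-t) * Real.log t with hI
  have h1 := Complex.hasDerivAt_GammaIntegral (s := 1) (by norm_num)
  have hD : (∫ t : ℝ in Set.Ioi 0, (t:ℂ) ^ ((1:ℂ) - 1) * (Real.log t * Real.exp (-t)))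
      = (I : ℂ) := by
    calc (∫ t : ℝ in Set.Ioi 0, (t:ℂ) ^ ((1:ℂ) - 1) * (Real.log t * Real.exp (-t)))
        = ∫ t : ℝ in Set.Ioi 0, ((Real.exp (-t) * Real.log t : ℝ) : ℂ) := by
          refine MeasureTheory.integral_congr_ae (Filter.Eventually.of_forall fun t => ?_)
          simp only [sub_self, Complex.cpow_zero, one_mul, Complex.ofReal_mul]
          ring
      _ = (I : ℂ) := by rw [hI]; exact integral_ofReal
  rw [hD] at h1
  have hev : Complex.Gamma =ᶠ[nhds (1:ℂ)] Complex.GammaIntegral := by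
    have hopen : IsOpen {s : ℂ | 0 < s.re} := isOpen_lt continuous_const Complex.continuous_re
    filter_upwards [hopen.mem_nhds (by norm_num : (0:ℝ) < (1:ℂ).re)] with s hs
    exact Complex.Gamma_eq_integral hs
  have h2 : HasDerivAt Complex.Gamma (I : ℂ) 1 := h1.congr_of_eventuallyEq hev
  have h3 : HasDerivAt (fun x : ℝ => (Complex.Gamma (x:ℂ)).re) ((I:ℂ)).re 1 :=
    HasDerivAt.real_of_complex (by exact_mod_cast h2)
  have h4 : HasDerivAt Real.Gamma I 1 := by
    have : (fun x : ℝ => (Complex.Gamma (x:ℂ)).re) = Real.Gamma := by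
      funext x; rw [Complex.Gamma_ofReal]; simp
    rwa [this, Complex.ofReal_re] at h3
  exact h4.unique Real.hasDerivAt_Gamma_one

lemma integrable_log_Ioo : MeasureTheory.IntegrableOn Real.log (Set.Ioo (0:ℝ) 1) := by
  refine subst_integrable _ ?_
  simp only [Real.log_exp, mul_neg]
  exact integrable_exp_mul_self.neg

lemma integral_log_Ioo : ∫ p in Set.Ioo (0:ℝ) 1, Real.log p = -1 := by
  rw [subst_integral]
  simp only [Real.log_exp, mul_neg]
  rw [MeasureTheory.integral_neg, integral_exp_mul_self]

lemma integrable_loglog_Ioo :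
    MeasureTheory.IntegrableOn (fun p => Real.log (-Real.log p)) (Set.Ioo (0:ℝ) 1) := by
  refine subst_integrable _ ?_
  simpa only [Real.log_exp, neg_neg] using integrable_exp_mul_log

lemma integral_loglog_Ioo : ∫ p in Set.Ioo (0:ℝ) 1, Real.log (-Real.log p)
    = -Real.eulerMascheroniConstant := by
  rw [subst_integral]
  simpa only [Real.log_exp, neg_neg] using integral_exp_mul_log_eq

instance : IsProbabilityMeasure (volume.restrict (Set.Ioo (0:ℝ) 1)) :=
  ⟨by simp [Real.volume_Ioo]⟩

/-- For a measurable quantile density `q > 0` on `(0,1)` with `ln q`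
integrable, and `η > 0`, the QFGCPE integral is bounded below by
`exp(∫₀¹ ln q) · exp(∫₀¹ ln(p (-ln p)^η) dp)`, where the second factor equals
`e^(-1 - ηγ)` with `γ` the Euler–Mascheroni constant. -/
theorem qfgcpe_ge_exp_entropy (q : ℝ → ℝ) (η : ℝ)
    (hq_meas : Measurable q)
    (hq_pos : ∀ p ∈ Set.Ioo (0 : ℝ) 1, 0 < q p)
    (hlogq_int : IntervalIntegrable (fun p => Real.log (q p)) volume 0 1)
    (hint : IntervalIntegrable (fun p => p * (-Real.log p) ^ η * q p) volume 0 1)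
    (hη : 0 < η) :
    (∫ p in (0 : ℝ)..1, p * (-Real.log p) ^ η * q p)
        ≥ Real.exp (∫ p in (0 : ℝ)..1, Real.log (q p)) *
            Real.exp (∫ p in (0 : ℝ)..1, Real.log (p * (-Real.log p) ^ η)) ∧
    Real.exp (∫ p in (0 : ℝ)..1, Real.log (p * (-Real.log p) ^ η))
        = Real.exp (-1 - η * Real.eulerMascheroniConstant) := by
  set F : ℝ → ℝ := fun p => p * (-Real.log p) ^ η * q p with hF
  set G : ℝ → ℝ := fun p => Real.log (p * (-Real.log p) ^ η) with hG
  -- basic pointwise facts on Ioo 0 1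
  have hfacts : ∀ p ∈ Set.Ioo (0:ℝ) 1, 0 < F p ∧
      G p = Real.log p + η * Real.log (-Real.log p) ∧
      Real.log (F p) = G p + Real.log (q p) := by
    intro p hp
    obtain ⟨hp0, hp1⟩ := hp
    have hlp : 0 < -Real.log p := by simpa using Real.log_neg hp0 hp1
    have hrp : 0 < (-Real.log p) ^ η := Real.rpow_pos_of_pos hlp η
    have hqp : 0 < q p := hq_pos p ⟨hp0, hp1⟩
    have hFp : 0 < F p := by positivity
    refine ⟨hFp, ?_, ?_⟩
    · show Real.log (p * (-Real.log p) ^ η) = _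
      rw [Real.log_mul hp0.ne' hrp.ne', Real.log_rpow hlp]
    · show Real.log (p * (-Real.log p) ^ η * q p)
          = Real.log (p * (-Real.log p) ^ η) + Real.log (q p)
      exact Real.log_mul (by positivity) hqp.ne'
  -- convert interval integrability to IntegrableOn Ioo
  have hconv : ∀ f : ℝ → ℝ, IntervalIntegrable f volume 0 1 →
      MeasureTheory.IntegrableOn f (Set.Ioo (0:ℝ) 1) := fun f hf =>
    ((intervalIntegrable_iff_integrableOn_Ioc_of_le zero_le_one).mp hf).mono_set
      Set.Ioo_subset_Ioc_self
  have hlogq : MeasureTheory.IntegrableOn (fun p => Real.log (q p)) (Set.Ioo (0:ℝ) 1) :=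
    hconv _ hlogq_int
  have hFint : MeasureTheory.IntegrableOn F (Set.Ioo (0:ℝ) 1) := hconv _ hint
  -- integrability of G on Ioo
  have hGsum : MeasureTheory.IntegrableOn
      (fun p => Real.log p + η * Real.log (-Real.log p)) (Set.Ioo (0:ℝ) 1) :=
    integrable_log_Ioo.add (integrable_loglog_Ioo.const_mul η)
  have hGint : MeasureTheory.IntegrableOn G (Set.Ioo (0:ℝ) 1) := by
    refine hGsum.congr ?_
    filter_upwards [ae_restrict_mem measurableSet_Ioo] with p hp
    exact ((hfacts p hp).2.1).symm
  -- integral of G over Ioo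
  have hGval : ∫ p in Set.Ioo (0:ℝ) 1, G p = -1 - η * Real.eulerMascheroniConstant := by
    rw [MeasureTheory.setIntegral_congr_fun measurableSet_Ioo
      (fun p hp => (hfacts p hp).2.1)]
    rw [MeasureTheory.integral_add integrable_log_Ioo (integrable_loglog_Ioo.const_mul η),
      MeasureTheory.integral_const_mul, integral_log_Ioo, integral_loglog_Ioo]
    ring
  -- integrability of log F
  have hlogF_int : MeasureTheory.IntegrableOn (fun p => Real.log (F p)) (Set.Ioo (0:ℝ) 1) := by
    refine (hGint.add hlogq).congr ?_
    filter_upwards [ae_restrict_mem measurableSet_Ioo] with p hp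
    exact ((hfacts p hp).2.2).symm
  -- integral of log F
  have hlogF_val : ∫ p in Set.Ioo (0:ℝ) 1, Real.log (F p)
      = (∫ p in Set.Ioo (0:ℝ) 1, G p) + ∫ p in Set.Ioo (0:ℝ) 1, Real.log (q p) := by
    rw [← MeasureTheory.integral_add hGint hlogq]
    exact MeasureTheory.setIntegral_congr_fun measurableSet_Ioo
      (fun p hp => (hfacts p hp).2.2)
  -- Jensen
  have hexp_eq : (fun p => Real.exp (Real.log (F p)))
      =ᵐ[volume.restrict (Set.Ioo (0:ℝ) 1)] F := by
    filter_upwards [ae_restrict_mem measurableSet_Ioo] with p hp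
    exact Real.exp_log (hfacts p hp).1
  have hgi : MeasureTheory.Integrable (Real.exp ∘ fun p => Real.log (F p))
      (volume.restrict (Set.Ioo (0:ℝ) 1)) := hFint.congr hexp_eq.symm
  have hJ := convexOn_exp.map_integral_le (μ := volume.restrict (Set.Ioo (0:ℝ) 1))
    (f := fun p => Real.log (F p)) Real.continuous_exp.continuousOn isClosed_univ
    (Filter.Eventually.of_forall fun _ => Set.mem_univ _) hlogF_int hgi
  have hJ' : Real.exp (∫ p in Set.Ioo (0:ℝ) 1, Real.log (F p))
      ≤ ∫ p in Set.Ioo (0:ℝ) 1, F p := by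
    refine hJ.trans_eq ?_
    exact MeasureTheory.integral_congr_ae hexp_eq
  -- convert interval integrals
  have hconvI : ∀ f : ℝ → ℝ, (∫ p in (0:ℝ)..1, f p) = ∫ p in Set.Ioo (0:ℝ) 1, f p := by
    intro f
    rw [intervalIntegral.integral_of_le zero_le_one, MeasureTheory.integral_Ioc_eq_integral_Ioo]
  constructor
  · rw [hconvI F, hconvI fun p => Real.log (q p), hconvI G, ← Real.exp_add]
    calc Real.exp ((∫ p in Set.Ioo (0:ℝ) 1, Real.log (q p)) + ∫ p in Set.Ioo (0:ℝ) 1, G p)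
        = Real.exp (∫ p in Set.Ioo (0:ℝ) 1, Real.log (F p)) := by
          rw [hlogF_val, add_comm]
      _ ≤ ∫ p in Set.Ioo (0:ℝ) 1, F p := hJ'
  · rw [hconvI G, hGval]
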